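/- arXiv:0707.0837 — 3 statements merged into one kernel-verified Lean document; each statement's English description precedes it below -/
import Mathlib

section
/- Let N be a positive integer, δ ∈ (0,1), and let k be an integer with 0 < k ≤ N. Set θ = 9/(8 ln(2/δ)) and ℒ(k) = k/N + (3/4)·(1 − 2k/N − √(1 + 4θk(1 − k/N)))/(1 + θN). If p̲ ∈ (0,1) satisfies ∑_{j=0}^{k−1} C(N,j) p̲^j (1−p̲)^(N−j) = 1 − δ/2 (the Clopper–Pearson lower confidence limit), then ℒ(k) < p̲. -/
/-!
Write `a = k/N` and `B(a, p) = 9 (a - p)² / (2 (2p + a)(3 - 2p - a))`. The number `ℒ(k)` is the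
smaller root of the quadratic equation `N · B(a, p) = log (2/δ)` in `p`, so `ℒ(k) < a`. Since
`B(a, p)` is strictly below the Bernoulli relative entropy `kl(a ‖ p)` for `0 < p < a`, the Chernoff
bound `P(Bin(N, p) ≥ k) ≤ exp(-N kl(a ‖ p))` gives `P(Bin(N, ℒ(k)) ≥ k) < δ/2`, i.e.
`P(Bin(N, ℒ(k)) < k) > 1 - δ/2`. As `p ↦ P(Bin(N, p) < k)` is antitone, `p̲ ≤ ℒ(k)` is impossible.
-/

open Finset Real

noncomputable def binomialWeight (N : ℕ) (p : ℝ) (j : ℕ) : ℝ :=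
  N.choose j * p ^ j * (1 - p) ^ (N - j)

theorem binomialWeight_nonneg (N j : ℕ) {p : ℝ} (hp0 : 0 ≤ p) (hp1 : p ≤ 1) :
    0 ≤ binomialWeight N p j := by
  have : 0 ≤ 1 - p := by linarith
  unfold binomialWeight; positivity

theorem sum_range_binomialWeight_mul_pow (N : ℕ) (p u v : ℝ) :
    ∑ j ∈ range (N + 1), binomialWeight N p j * (u ^ j * v ^ (N - j)) =
      (p * u + (1 - p) * v) ^ N := by
  rw [add_pow]
  refine sum_congr rfl fun j _ => ?_
  rw [binomialWeight, mul_pow, mul_pow]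
  ring

theorem sum_range_binomialWeight (N : ℕ) (p : ℝ) :
    ∑ j ∈ range (N + 1), binomialWeight N p j = 1 := by
  simpa using sum_range_binomialWeight_mul_pow N p 1 1

theorem sum_range_binomialWeight_eq_one_sub {N k : ℕ} (hk : k ≤ N + 1) (p : ℝ) :
    ∑ j ∈ range k, binomialWeight N p j = 1 - ∑ j ∈ Ico k (N + 1), binomialWeight N p j := by
  rw [← sum_range_binomialWeight N p, ← sum_range_add_sum_Ico _ hk, add_sub_cancel_right]

theorem hasDerivAt_binomialWeight (N j : ℕ) (x : ℝ) :
    HasDerivAt (fun p => binomialWeight N p j)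
      (N.choose j * j * x ^ (j - 1) * (1 - x) ^ (N - j) -
        N.choose (j + 1) * (j + 1 : ℕ) * x ^ (j + 1 - 1) * (1 - x) ^ (N - (j + 1))) x := by
  have hpow : HasDerivAt (fun p : ℝ => (1 - p) ^ (N - j))
      ((N - j : ℕ) * (1 - x) ^ (N - j - 1) * -1) x :=
    (hasDerivAt_pow (N - j) (1 - x)).comp x ((hasDerivAt_id' x).const_sub 1)
  have hchoose : (N.choose (j + 1) * (j + 1 : ℕ) : ℝ) = N.choose j * (N - j : ℕ) := by
    exact_mod_cast Nat.choose_succ_right_eq N j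
  refine (((hasDerivAt_pow j x).const_mul (N.choose j : ℝ)).mul hpow).congr_deriv ?_
  rw [hchoose, Nat.add_sub_cancel, Nat.sub_sub]
  ring

theorem antitoneOn_sum_range_binomialWeight (N k : ℕ) :
    AntitoneOn (fun p => ∑ j ∈ range k, binomialWeight N p j) (Set.Icc 0 1) := by
  have hderiv : ∀ x, HasDerivAt (fun p => ∑ j ∈ range k, binomialWeight N p j)
      (-(N.choose k * k * x ^ (k - 1) * (1 - x) ^ (N - k))) x := by
    intro x
    have := HasDerivAt.fun_sum fun j (_ : j ∈ range k) => hasDerivAt_binomialWeight N j x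
    rwa [sum_range_sub' (fun i => (N.choose i * i * x ^ (i - 1) * (1 - x) ^ (N - i) : ℝ)),
      Nat.cast_zero, mul_zero, zero_mul, zero_mul, zero_sub] at this
  refine antitoneOn_of_deriv_nonpos (convex_Icc 0 1)
    (fun x _ => (hderiv x).continuousAt.continuousWithinAt)
    (fun x _ => (hderiv x).differentiableAt.differentiableWithinAt) fun x hx => ?_
  rw [interior_Icc] at hx
  have : 0 ≤ 1 - x := by linarith [hx.2]
  have := hx.1.le
  rw [(hderiv x).deriv, neg_nonpos]
  positivity

theorem sum_Ico_binomialWeight_mul_le (N k : ℕ) {p u v : ℝ} (hp0 : 0 ≤ p) (hp1 : p ≤ 1)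
    (hv : 0 ≤ v) (hvu : v ≤ u) :
    (∑ j ∈ Ico k (N + 1), binomialWeight N p j) * (u ^ k * v ^ (N - k)) ≤
      (p * u + (1 - p) * v) ^ N := by
  have hu : 0 ≤ u := hv.trans hvu
  have hmono : ∀ j ∈ Ico k (N + 1), u ^ k * v ^ (N - k) ≤ u ^ j * v ^ (N - j) := by
    intro j hj
    obtain ⟨hkj, hjN⟩ := mem_Ico.1 hj
    calc u ^ k * v ^ (N - k) = u ^ k * v ^ (j - k) * v ^ (N - j) := by
          rw [mul_assoc, ← pow_add]; congr 2; omega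
      _ ≤ u ^ k * u ^ (j - k) * v ^ (N - j) := by gcongr
      _ = u ^ j * v ^ (N - j) := by rw [← pow_add, Nat.add_sub_cancel' hkj]
  calc (∑ j ∈ Ico k (N + 1), binomialWeight N p j) * (u ^ k * v ^ (N - k))
      ≤ ∑ j ∈ Ico k (N + 1), binomialWeight N p j * (u ^ j * v ^ (N - j)) := by
        rw [sum_mul]
        exact sum_le_sum fun j hj =>
          mul_le_mul_of_nonneg_left (hmono j hj) (binomialWeight_nonneg N j hp0 hp1)
    _ ≤ ∑ j ∈ range (N + 1), binomialWeight N p j * (u ^ j * v ^ (N - j)) := by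
        refine sum_le_sum_of_subset_of_nonneg (fun j hj => ?_) fun j _ _ => ?_
        · simp only [mem_range, mem_Ico] at hj ⊢; omega
        · have := binomialWeight_nonneg N j hp0 hp1; positivity
    _ = (p * u + (1 - p) * v) ^ N := sum_range_binomialWeight_mul_pow N p u v

theorem sum_Ico_binomialWeight_mul_le_pow_mul_pow {N k : ℕ} (hkN : k ≤ N) {p a : ℝ}
    (hp0 : 0 < p) (hp1 : p < 1) (hpa : p ≤ a) (ha1 : a ≤ 1) :
    (∑ j ∈ Ico k (N + 1), binomialWeight N p j) * (a ^ k * (1 - a) ^ (N - k)) ≤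
      p ^ k * (1 - p) ^ (N - k) := by
  have hq : 0 < 1 - p := by linarith
  -- the optimal Chernoff tilt `u / v = a (1 - p) / (p (1 - a))`
  have hchernoff := sum_Ico_binomialWeight_mul_le N k hp0.le hp1.le
    (u := a * (1 - p)) (v := p * (1 - a)) (by nlinarith) (by nlinarith)
  rw [show p * (a * (1 - p)) + (1 - p) * (p * (1 - a)) = p * (1 - p) by ring] at hchernoff
  simp only [mul_pow, ← pow_mul_pow_sub p hkN, ← pow_mul_pow_sub (1 - p) hkN] at hchernoff
  refine le_of_mul_le_mul_right ?_ (by positivity : 0 < (1 - p) ^ k * p ^ (N - k))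
  linear_combination hchernoff

-- As `log 0 = 0`, the second term vanishes at `a = 1`, leaving `klBernoulli 1 p = -log p`.
noncomputable def klBernoulli (a p : ℝ) : ℝ :=
  a * (log a - log p) + (1 - a) * (log (1 - a) - log (1 - p))

theorem sum_Ico_binomialWeight_le_exp_neg_klBernoulli {N k : ℕ} (hkN : k ≤ N) {p : ℝ}
    (hp0 : 0 < p) (hpk : p < k / N) :
    ∑ j ∈ Ico k (N + 1), binomialWeight N p j ≤ exp (-(N * klBernoulli (k / N) p)) := by
  set a : ℝ := k / N with ha
  have hN : (0 : ℝ) < N := by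
    rcases Nat.eq_zero_or_pos N with rfl | h
    · simp [ha] at hpk; linarith
    · exact_mod_cast h
  have ha1 : a ≤ 1 := div_le_one_of_le₀ (by exact_mod_cast hkN) hN.le
  have ha0 : 0 < a := hp0.trans hpk
  have hp1 : p < 1 := hpk.trans_le ha1
  have hweight : 0 < a ^ k * (1 - a) ^ (N - k) := by
    rcases hkN.lt_or_eq with hlt | rfl
    · have : a < 1 := (div_lt_one hN).2 (by exact_mod_cast hlt)
      have : 0 < 1 - a := by linarith
      positivity
    · simpa using pow_pos ha0 k
  obtain ⟨hak, hbk⟩ := mul_ne_zero_iff.1 hweight.ne'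
  have hk : (k : ℝ) = N * a := by rw [ha]; field_simp
  have hNk : ((N - k : ℕ) : ℝ) = N * (1 - a) := by rw [Nat.cast_sub hkN, hk]; ring
  have hexp : exp (-(N * klBernoulli a p)) * (a ^ k * (1 - a) ^ (N - k)) =
      p ^ k * (1 - p) ^ (N - k) := by
    have : 0 < 1 - p := by linarith
    rw [← exp_log hweight, ← exp_add, ← exp_log (by positivity : 0 < p ^ k * (1 - p) ^ (N - k)),
      log_mul hak hbk, log_mul (by positivity) (by positivity), log_pow, log_pow, log_pow, log_pow,
      hNk, hk, klBernoulli]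
    ring
  refine le_of_mul_le_mul_right ?_ hweight
  rw [hexp]
  exact sum_Ico_binomialWeight_mul_le_pow_mul_pow hkN hp0 hp1 hpk.le ha1

-- `(a - p)² / (2 m (1 - m))` with `m = (a + 2p) / 3`: the quadratic bound on `kl(a ‖ p)` with the
-- Bernoulli variance taken one third of the way from `p` to `a`.
noncomputable def klBernoulliLowerBound (a p : ℝ) : ℝ :=
  9 * (a - p) ^ 2 / (2 * (2 * p + a) * (3 - 2 * p - a))

theorem continuousOn_klBernoulli {a p : ℝ} (hp : 0 < p) (ha : a ≤ 1) :
    ContinuousOn (klBernoulli a) (Set.Icc p a) := by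
  have hlog : ContinuousOn log (Set.Icc p a) :=
    continuousOn_log.mono fun x hx => (hp.trans_le hx.1).ne'
  show ContinuousOn (fun x => klBernoulli a x) _
  rcases ha.lt_or_eq with ha | rfl
  · have hlog' : ContinuousOn (fun x => log (1 - x)) (Set.Icc p a) :=
      continuousOn_log.comp (by fun_prop) fun x hx => by
        have := hx.2; simp only [Set.mem_compl_iff, Set.mem_singleton_iff]; linarith
    simp only [klBernoulli]
    fun_prop
  · simp only [klBernoulli, sub_self, zero_mul, add_zero]
    fun_prop

theorem continuousOn_klBernoulliLowerBound {a p : ℝ} (hp : 0 < p) (ha : a ≤ 1) :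
    ContinuousOn (klBernoulliLowerBound a) (Set.Icc p a) := by
  rcases ha.lt_or_eq with ha | rfl
  · refine ContinuousOn.div (by fun_prop) (by fun_prop) fun x hx => ?_
    have := hx.1; have := hx.2
    have : 0 < 2 * x + a := by linarith
    have : 0 < 3 - 2 * x - a := by linarith
    positivity
  · -- at `a = 1` the factor `3 - 2x - a = 2 (1 - x)` cancels, also at `x = 1` by `0 / 0 = 0`
    have hcancel : ∀ x ∈ Set.Icc p 1,
        klBernoulliLowerBound 1 x = 9 * (1 - x) / (4 * (2 * x + 1)) := by
      intro x hx
      rcases hx.2.lt_or_eq with hx1 | rfl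
      · have := hx.1
        rw [klBernoulliLowerBound, div_eq_div_iff (by nlinarith) (by linarith)]
        ring
      · simp [klBernoulliLowerBound]
    refine (ContinuousOn.div (by fun_prop) (by fun_prop) fun x hx => ?_).congr hcancel
    linarith [hx.1]

theorem hasDerivAt_klBernoulli (a : ℝ) {x : ℝ} (hx0 : 0 < x) (hx1 : x < 1) :
    HasDerivAt (klBernoulli a) ((x - a) / (x * (1 - x))) x := by
  have hlog : HasDerivAt (fun y => log (1 - y)) ((1 - x)⁻¹ * -1) x :=
    (hasDerivAt_log (by linarith)).comp x ((hasDerivAt_id' x).const_sub 1)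
  have := (((hasDerivAt_log hx0.ne').const_sub (log a)).const_mul a).add
    ((hlog.const_sub (log (1 - a))).const_mul (1 - a))
  refine this.congr_deriv ?_
  field_simp [show 1 - x ≠ 0 by linarith]
  ring

theorem hasDerivAt_klBernoulliLowerBound (a : ℝ) {x : ℝ} (hv : 2 * x + a ≠ 0)
    (hw : 3 - 2 * x - a ≠ 0) :
    HasDerivAt (klBernoulliLowerBound a)
      (-(9 * (a - x) * ((2 * x + a) * (3 - 2 * x - a) + (a - x) * (3 - 4 * x - 2 * a))) /
        ((2 * x + a) ^ 2 * (3 - 2 * x - a) ^ 2)) x := by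
  have hnum : HasDerivAt (fun y => 9 * (a - y) ^ 2) (9 * (2 * (a - x) * -1)) x := by
    simpa using (((hasDerivAt_id' x).const_sub a).pow 2).const_mul 9
  have hden : HasDerivAt (fun y => 2 * (2 * y + a) * (3 - 2 * y - a))
      (2 * (2 * 1) * (3 - 2 * x - a) + 2 * (2 * x + a) * -(2 * 1)) x :=
    ((((hasDerivAt_id' x).const_mul 2).add_const a).const_mul 2).mul
      (((hasDerivAt_id' x).const_mul 2).const_sub 3 |>.sub_const a)
  refine (hnum.div hden (by simp [hv, hw])).congr_deriv ?_
  field_simp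
  ring

theorem klBernoulliLowerBound_lt_klBernoulli {a p : ℝ} (hp : 0 < p) (hpa : p < a) (ha : a ≤ 1) :
    klBernoulliLowerBound a p < klBernoulli a p := by
  have hanti :
      StrictAntiOn (fun x => klBernoulli a x - klBernoulliLowerBound a x) (Set.Icc p a) := by
    refine strictAntiOn_of_deriv_neg (convex_Icc p a) ?_ fun x hx => ?_
    · exact (continuousOn_klBernoulli hp ha).sub (continuousOn_klBernoulliLowerBound hp ha)
    rw [interior_Icc] at hx
    obtain ⟨hpx, hxa⟩ := hx
    have hx0 : 0 < x := hp.trans hpx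
    have hv : 0 < 2 * x + a := by linarith
    have hw : 0 < 3 - 2 * x - a := by linarith
    rw [((hasDerivAt_klBernoulli a hx0 (by linarith)).fun_sub
      (hasDerivAt_klBernoulliLowerBound a hv.ne' hw.ne')).deriv]
    have hsimp : (x - a) / (x * (1 - x)) -
        -(9 * (a - x) * ((2 * x + a) * (3 - 2 * x - a) + (a - x) * (3 - 4 * x - 2 * a))) /
          ((2 * x + a) ^ 2 * (3 - 2 * x - a) ^ 2) =
        -((a - x) ^ 3 * (x * (2 * x + a) ^ 2 + (1 - x) * (3 - 2 * x - a) ^ 2)) /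
          (x * (1 - x) * ((2 * x + a) ^ 2 * (3 - 2 * x - a) ^ 2)) := by
      have : x * (1 - x) ≠ 0 := by nlinarith
      rw [div_sub_div _ _ this (by positivity), div_eq_div_iff (by positivity) (by positivity)]
      ring
    have : 0 < 1 - x := by linarith
    have : 0 < a - x := by linarith
    rw [hsimp]
    exact div_neg_of_neg_of_pos (neg_neg_of_pos (by positivity)) (by positivity)
  have := hanti (Set.left_mem_Icc.2 hpa.le) (Set.right_mem_Icc.2 hpa.le) hpa
  have hzero : klBernoulli a a - klBernoulliLowerBound a a = 0 := by
    simp [klBernoulli, klBernoulliLowerBound]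
  linarith

noncomputable def clopperPearsonLowerApprox (θ n k : ℝ) : ℝ :=
  k / n + 3 / 4 * ((1 - 2 * k / n - √(1 + 4 * θ * k * (1 - k / n))) / (1 + θ * n))

section clopperPearsonLowerApprox

variable {θ n k : ℝ}

theorem one_le_one_add_mul_one_sub_div (hθ : 0 ≤ θ) (hk : 0 < k) (hkn : k ≤ n) :
    1 ≤ 1 + 4 * θ * k * (1 - k / n) := by
  have : 0 ≤ 1 - k / n := sub_nonneg.2 (div_le_one_of_le₀ hkn (hk.le.trans hkn))
  nlinarith [mul_nonneg (mul_nonneg hθ hk.le) this]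

theorem clopperPearsonLowerApprox_lt (hθ : 0 ≤ θ) (hk : 0 < k) (hkn : k ≤ n) :
    clopperPearsonLowerApprox θ n k < k / n := by
  have hn : 0 < n := hk.trans_le hkn
  have hsqrt := one_le_sqrt.2 (one_le_one_add_mul_one_sub_div hθ hk hkn)
  have : 0 < 2 * k / n := by positivity
  have : (1 - 2 * k / n - √(1 + 4 * θ * k * (1 - k / n))) / (1 + θ * n) < 0 :=
    div_neg_of_neg_of_pos (by linarith) (by positivity)
  rw [clopperPearsonLowerApprox]
  linarith

theorem mul_klBernoulliLowerBound_clopperPearsonLowerApprox (hθ : 0 < θ) (hk : 0 < k)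
    (hkn : k ≤ n) :
    n * klBernoulliLowerBound (k / n) (clopperPearsonLowerApprox θ n k) = 9 / (8 * θ) := by
  have hn : 0 < n := hk.trans_le hkn
  have hD : 0 < 1 + θ * n := by positivity
  have hlt : 0 < k / n - clopperPearsonLowerApprox θ n k :=
    sub_pos.2 (clopperPearsonLowerApprox_lt hθ.le hk hkn)
  have hsq := sq_sqrt (zero_le_one.trans (one_le_one_add_mul_one_sub_div hθ.le hk hkn))
  set a := k / n with ha
  set L := clopperPearsonLowerApprox θ n k with hL
  have hS : √(1 + 4 * θ * k * (1 - a)) = 1 - 2 * a + 4 / 3 * (1 + θ * n) * (a - L) := by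
    rw [hL, clopperPearsonLowerApprox, ← ha, mul_div_assoc, ← ha]
    field_simp
    ring
  have hka : k = n * a := by rw [ha]; field_simp
  have hquad : 4 * θ * n * (a - L) ^ 2 = (2 * L + a) * (3 - 2 * L - a) := by
    refine mul_left_cancel₀ hD.ne' ?_
    rw [hS, hka] at hsq
    linear_combination (9 / 4) * hsq
  rw [klBernoulliLowerBound, mul_assoc 2, ← hquad]
  field_simp
  ring

end clopperPearsonLowerApprox

theorem clopper_pearson_L_lt_lower_general
    (N : ℕ) (δ : ℝ) (hδ : δ ∈ Set.Ioo (0:ℝ) 1)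
    (k : ℕ) (hk0 : 0 < k) (hkN : k ≤ N)
    (θ : ℝ) (hθ : θ = 9 / (8 * Real.log (2 / δ)))
    (L : ℝ)
    (hL : L = (k : ℝ) / N +
      3 / 4 * ((1 - 2 * k / N - Real.sqrt (1 + 4 * θ * k * (1 - (k : ℝ) / N))) / (1 + θ * N)))
    (punder : ℝ) (hpunder : punder ∈ Set.Ioo (0:ℝ) 1)
    (hsum : ∑ j ∈ Finset.range k,
      (N.choose j : ℝ) * punder ^ j * (1 - punder) ^ (N - j) = 1 - δ / 2) :
    L < punder := by
  change L = clopperPearsonLowerApprox θ N k at hL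
  change ∑ j ∈ range k, binomialWeight N punder j = 1 - δ / 2 at hsum
  obtain ⟨hδ0, hδ1⟩ := hδ
  have hk : (0 : ℝ) < k := by exact_mod_cast hk0
  have hkN' : (k : ℝ) ≤ N := by exact_mod_cast hkN
  have hlog : 0 < log (2 / δ) := log_pos (by rw [lt_div_iff₀ hδ0]; linarith)
  have hθ0 : 0 < θ := by rw [hθ]; positivity
  have hLk : L < k / N := hL ▸ clopperPearsonLowerApprox_lt hθ0.le hk hkN'
  have hk1 : (k : ℝ) / N ≤ 1 := div_le_one_of_le₀ hkN' (hk.le.trans hkN')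
  by_contra! hpL
  have hL0 : 0 < L := hpunder.1.trans_le hpL
  have hkl : log (2 / δ) < N * klBernoulli (k / N) L := calc
    log (2 / δ) = 9 / (8 * θ) := by rw [hθ]; field_simp
    _ = N * klBernoulliLowerBound (k / N) L :=
      hL ▸ (mul_klBernoulliLowerBound_clopperPearsonLowerApprox hθ0 hk hkN').symm
    _ < N * klBernoulli (k / N) L :=
      mul_lt_mul_of_pos_left (klBernoulliLowerBound_lt_klBernoulli hL0 hLk hk1) (hk.trans_le hkN')
  have htail : ∑ j ∈ Ico k (N + 1), binomialWeight N L j < δ / 2 := calc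
    _ ≤ exp (-(N * klBernoulli (k / N) L)) :=
      sum_Ico_binomialWeight_le_exp_neg_klBernoulli hkN hL0 hLk
    _ < exp (-log (2 / δ)) := by gcongr
    _ = δ / 2 := by rw [exp_neg, exp_log (by positivity), inv_div]
  have hmono : ∑ j ∈ range k, binomialWeight N L j ≤ ∑ j ∈ range k, binomialWeight N punder j :=
    antitoneOn_sum_range_binomialWeight N k ⟨hpunder.1.le, hpunder.2.le⟩
      ⟨hL0.le, (hLk.trans_le hk1).le⟩ hpL
  rw [hsum, sum_range_binomialWeight_eq_one_sub (by omega)] at hmono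
  linarith

/-- The Clopper–Pearson lower confidence limit is bounded below by `ℒ(k)`. -/
theorem clopper_pearson_L_lt_lower
    (N : ℕ) (hN : 0 < N) (δ : ℝ) (hδ : δ ∈ Set.Ioo (0:ℝ) 1)
    (k : ℕ) (hk0 : 0 < k) (hkN : k ≤ N)
    (θ : ℝ) (hθ : θ = 9 / (8 * Real.log (2 / δ)))
    (L : ℝ)
    (hL : L = (k : ℝ) / N +
      3 / 4 * ((1 - 2 * k / N - Real.sqrt (1 + 4 * θ * k * (1 - (k : ℝ) / N))) / (1 + θ * N)))
    (punder : ℝ) (hpunder : punder ∈ Set.Ioo (0:ℝ) 1)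
    (hsum : ∑ j ∈ Finset.range k,
      (N.choose j : ℝ) * punder ^ j * (1 - punder) ^ (N - j) = 1 - δ / 2) :
    L < punder :=
  clopper_pearson_L_lt_lower_general N δ hδ k hk0 hkN θ hθ L hL punder hpunder hsum
end

section
/- Let N be a positive integer, p ∈ (0,1), and ε ∈ (0, p). If K is a Binomial(N,p) random variable, then Pr{K/N ≤ p − ε} ≤ exp(− N ε² / (2 (p − ε/3)(1 − p + ε/3))); that is, ∑ over integers k with 0 ≤ k ≤ N and k ≤ N(p − ε) of C(N,k) p^k (1−p)^(N−k) is at most exp(− N ε² / (2 (p − ε/3)(1 − p + ε/3))). -/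
/-!
Chernoff's method: tilting the binomial weights by `s ^ (k - N x)` with `0 < s ≤ 1` and
optimising over `s` bounds the lower tail by `exp (-N · kl(p - ε ‖ p))`. The binary relative
entropy is `kl(x ‖ p) = ∫ₓᵖ (t - x) / (t (1 - t)) dt`, and `t ↦ 1 / (t (1 - t))` is convex, so
replacing it by its tangent at the barycentre `p - ε/3` of the weight `t - x` on `[x, p]` gives
`kl(p - ε ‖ p) ≥ ε² / (2 (p - ε/3) (1 - p + ε/3))`.
-/

open Real Finset

noncomputable def binaryKL (x p : ℝ) : ℝ :=
  x * log (x / p) + (1 - x) * log ((1 - x) / (1 - p))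

section Chernoff

lemma sum_binomial_le_rpow_mul_pow (N : ℕ) {p q s a : ℝ} (hp : 0 ≤ p) (hq : 0 ≤ q)
    (hs0 : 0 < s) (hs1 : s ≤ 1) :
    ∑ k ∈ range (N + 1), (if (k : ℝ) ≤ a then (N.choose k : ℝ) * p ^ k * q ^ (N - k) else 0)
      ≤ s ^ (-a) * (p * s + q) ^ N := by
  have hterm : ∀ k ∈ range (N + 1),
      (if (k : ℝ) ≤ a then (N.choose k : ℝ) * p ^ k * q ^ (N - k) else 0)
        ≤ s ^ (-a) * ((p * s) ^ k * q ^ (N - k) * N.choose k) := by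
    intro k _
    split_ifs with hk
    · have htilt : 1 ≤ s ^ ((k : ℝ) - a) :=
        one_le_rpow_of_pos_of_le_one_of_nonpos hs0 hs1 (by linarith)
      calc (N.choose k : ℝ) * p ^ k * q ^ (N - k)
          ≤ (N.choose k : ℝ) * p ^ k * q ^ (N - k) * s ^ ((k : ℝ) - a) :=
            le_mul_of_one_le_right (by positivity) htilt
        _ = s ^ (-a) * ((p * s) ^ k * q ^ (N - k) * N.choose k) := by
            rw [sub_eq_add_neg, rpow_add hs0, rpow_natCast]; ring
    · positivity
  calc _ ≤ ∑ k ∈ range (N + 1), s ^ (-a) * ((p * s) ^ k * q ^ (N - k) * N.choose k) :=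
        sum_le_sum hterm
    _ = s ^ (-a) * (p * s + q) ^ N := by rw [← mul_sum, add_pow]

lemma optimal_tilt_eq_exp_neg_binaryKL (N : ℕ) {x p : ℝ} (hx0 : 0 < x) (hx1 : x < 1)
    (hp0 : 0 < p) (hp1 : p < 1) :
    let s := x * (1 - p) / ((1 - x) * p)
    s ^ (-(N * x)) * (p * s + (1 - p)) ^ N = exp (-(N * binaryKL x p)) := by
  intro s
  have hq : 0 < 1 - p := by linarith
  have hy : 0 < 1 - x := by linarith
  have hs : 0 < s := div_pos (mul_pos hx0 hq) (mul_pos hy hp0)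
  have hps : p * s + (1 - p) = (1 - p) / (1 - x) := by
    simp only [s]; field_simp; ring
  rw [hps, rpow_def_of_pos hs, ← exp_log (by positivity : 0 < (1 - p) / (1 - x)),
    ← exp_nat_mul, ← exp_add]
  congr 1
  simp only [s, binaryKL]
  rw [log_div (by positivity) (by positivity), log_mul hx0.ne' hq.ne', log_mul hy.ne' hp0.ne',
    log_div hq.ne' hy.ne', log_div hx0.ne' hp0.ne', log_div hy.ne' hq.ne']
  ring

theorem sum_binomial_le_exp_neg_binaryKL (N : ℕ) {x p : ℝ} (hx : 0 < x) (hxp : x ≤ p)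
    (hp : p < 1) :
    ∑ k ∈ range (N + 1),
      (if (k : ℝ) ≤ N * x then (N.choose k : ℝ) * p ^ k * (1 - p) ^ (N - k) else 0)
      ≤ exp (-(N * binaryKL x p)) := by
  have hp0 : 0 < p := hx.trans_le hxp
  have hs1 : x * (1 - p) / ((1 - x) * p) ≤ 1 := by
    rw [div_le_one (by nlinarith)]; nlinarith
  rw [← optimal_tilt_eq_exp_neg_binaryKL N hx (by linarith) hp0 hp]
  exact sum_binomial_le_rpow_mul_pow N hp0.le (by linarith)
    (div_pos (mul_pos hx (by linarith)) (mul_pos (by linarith) hp0)) hs1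

end Chernoff

section RelativeEntropy

lemma continuousOn_sub_div_mul_one_sub (x : ℝ) :
    ContinuousOn (fun t => (t - x) / (t * (1 - t))) (Set.Ioo 0 1) :=
  ContinuousOn.div (by fun_prop) (by fun_prop) fun _ ht => (mul_pos ht.1 (sub_pos.2 ht.2)).ne'

lemma binaryKL_eq_integral {x p : ℝ} (hx : x ∈ Set.Ioo 0 1) (hp : p ∈ Set.Ioo 0 1) :
    binaryKL x p = ∫ t in x..p, (t - x) / (t * (1 - t)) := by
  have hunit : Set.uIcc x p ⊆ Set.Ioo 0 1 := Set.ordConnected_Ioo.uIcc_subset hx hp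
  have hderiv : ∀ t ∈ Set.uIcc x p, HasDerivAt (fun t => -(x * log t + (1 - x) * log (1 - t)))
      ((t - x) / (t * (1 - t))) t := by
    intro t ht
    obtain ⟨ht0, ht1⟩ := hunit ht
    have hlog := ((hasDerivAt_log ht0.ne').const_mul x).add
      ((((hasDerivAt_id' t).const_sub 1).log (sub_pos.2 ht1).ne').const_mul (1 - x))
    refine hlog.neg.congr_deriv ?_
    field_simp [(sub_pos.2 ht1).ne']
    ring
  rw [intervalIntegral.integral_eq_sub_of_hasDerivAt hderiv
    ((continuousOn_sub_div_mul_one_sub x).mono hunit).intervalIntegrable, binaryKL,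
    log_div hx.1.ne' hp.1.ne', log_div (sub_pos.2 hx.2).ne' (sub_pos.2 hp.2).ne']
  ring

lemma tangent_le_inv_mul_one_sub {t c : ℝ} (ht0 : 0 < t) (ht1 : t < 1) (hc0 : 0 < c)
    (hc1 : c < 1) :
    1 / (c * (1 - c)) + (2 * c - 1) / (c * (1 - c)) ^ 2 * (t - c) ≤ 1 / (t * (1 - t)) := by
  have hgap : 1 / (t * (1 - t)) - (1 / (c * (1 - c)) + (2 * c - 1) / (c * (1 - c)) ^ 2 * (t - c))
      = (t - c) ^ 2 * ((1 - t) * (1 - c) ^ 2 + t * c ^ 2) / (t * (1 - t) * (c * (1 - c)) ^ 2) := by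
    field_simp [(sub_pos.2 ht1).ne', (sub_pos.2 hc1).ne']
    ring
  have hnum : 0 ≤ (1 - t) * (1 - c) ^ 2 + t * c ^ 2 :=
    add_nonneg (mul_nonneg (sub_nonneg.2 ht1.le) (sq_nonneg _)) (mul_nonneg ht0.le (sq_nonneg _))
  have hden : 0 ≤ t * (1 - t) * (c * (1 - c)) ^ 2 :=
    mul_nonneg (mul_pos ht0 (sub_pos.2 ht1)).le (sq_nonneg _)
  exact sub_nonneg.1 (hgap ▸ div_nonneg (mul_nonneg (sq_nonneg _) hnum) hden)

/-- `a + 2 (b - a) / 3` is the barycentre of the weight `t - a` on `[a, b]`, so the linear part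
integrates to zero. -/
lemma integral_sub_mul_affine_at_barycentre (a b A B : ℝ) :
    ∫ t in a..b, (t - a) * (A + B * (t - (a + 2 * (b - a) / 3))) = A * (b - a) ^ 2 / 2 := by
  have hderiv : ∀ t ∈ Set.uIcc a b, HasDerivAt
      (fun t => A * (t - a) ^ 2 / 2 + B * (t - a) ^ 3 / 3 - B * (b - a) / 3 * (t - a) ^ 2)
      ((t - a) * (A + B * (t - (a + 2 * (b - a) / 3)))) t := by
    intro t _
    have hlin : HasDerivAt (fun u : ℝ => u - a) 1 t := (hasDerivAt_id t).sub_const a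
    refine ((((hlin.pow 2).const_mul A).div_const 2).add
      (((hlin.pow 3).const_mul B).div_const 3)).sub
      ((hlin.pow 2).const_mul (B * (b - a) / 3)) |>.congr_deriv ?_
    ring
  rw [intervalIntegral.integral_eq_sub_of_hasDerivAt hderiv
    (Continuous.intervalIntegrable (by fun_prop) _ _)]
  ring

theorem div_le_binaryKL_sub {p ε : ℝ} (hp : p < 1) (hε0 : 0 < ε) (hεp : ε < p) :
    ε ^ 2 / (2 * (p - ε / 3) * (1 - p + ε / 3)) ≤ binaryKL (p - ε) p := by
  set c := p - ε / 3 with hc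
  have hc0 : 0 < c := by linarith
  have hc1 : c < 1 := by linarith
  have hbary : c = (p - ε) + 2 * (p - (p - ε)) / 3 := by ring
  have hx : p - ε ∈ Set.Ioo 0 1 := ⟨by linarith, by linarith⟩
  have hunit : Set.uIcc (p - ε) p ⊆ Set.Ioo 0 1 :=
    Set.ordConnected_Ioo.uIcc_subset hx ⟨by linarith, hp⟩
  rw [binaryKL_eq_integral hx ⟨by linarith, hp⟩]
  calc ε ^ 2 / (2 * c * (1 - p + ε / 3))
      = ∫ t in (p - ε)..p, (t - (p - ε)) *
          (1 / (c * (1 - c)) + (2 * c - 1) / (c * (1 - c)) ^ 2 * (t - c)) := by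
        rw [hbary, integral_sub_mul_affine_at_barycentre, ← hbary, hc]
        field_simp
        ring
    _ ≤ ∫ t in (p - ε)..p, (t - (p - ε)) / (t * (1 - t)) := by
        refine intervalIntegral.integral_mono_on (by linarith)
          (Continuous.intervalIntegrable (by fun_prop) _ _) ?_ fun t ht => ?_
        · exact ((continuousOn_sub_div_mul_one_sub _).mono hunit).intervalIntegrable
        · rw [div_eq_mul_one_div (t - (p - ε))]
          exact mul_le_mul_of_nonneg_left
            (tangent_le_inv_mul_one_sub (by linarith [ht.1]) (by linarith [ht.2]) hc0 hc1)
            (by linarith [ht.1])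

end RelativeEntropy

theorem massart_lower_tail_general
    (N : ℕ) (p : ℝ) (hp : p ∈ Set.Ioo (0:ℝ) 1)
    (ε : ℝ) (hε : ε ∈ Set.Ioo 0 p) :
    ∑ k ∈ Finset.range (N + 1),
      (if (k : ℝ) ≤ (N : ℝ) * (p - ε) then (N.choose k : ℝ) * p ^ k * (1 - p) ^ (N - k) else 0)
    ≤ Real.exp (- (N * ε ^ 2) / (2 * (p - ε / 3) * (1 - p + ε / 3))) := by
  obtain ⟨-, hp1⟩ := hp
  obtain ⟨hε0, hεp⟩ := hε
  calc _ ≤ exp (-(N * binaryKL (p - ε) p)) :=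
        sum_binomial_le_exp_neg_binaryKL N (by linarith) (by linarith) hp1
    _ ≤ exp (-(N * (ε ^ 2 / (2 * (p - ε / 3) * (1 - p + ε / 3))))) := by
        gcongr
        exact div_le_binaryKL_sub hp1 hε0 hεp
    _ = _ := by congr 1; ring

/-- Massart's lower-tail inequality for the binomial distribution:
for `ε ∈ (0, p)`,
`Pr{K/N ≤ p - ε} ≤ exp(-Nε² / (2(p - ε/3)(1 - p + ε/3)))`. -/
theorem massart_lower_tail
    (N : ℕ) (hN : 0 < N) (p : ℝ) (hp : p ∈ Set.Ioo (0:ℝ) 1)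
    (ε : ℝ) (hε : ε ∈ Set.Ioo 0 p) :
    ∑ k ∈ Finset.range (N + 1),
      (if (k : ℝ) ≤ (N : ℝ) * (p - ε) then (N.choose k : ℝ) * p ^ k * (1 - p) ^ (N - k) else 0)
    ≤ Real.exp (- (N * ε ^ 2) / (2 * (p - ε / 3) * (1 - p + ε / 3))) :=
  massart_lower_tail_general N p hp ε hε
end

section
/- Let N be a positive integer and let k be an integer with 0 ≤ k ≤ N. Then for every x ∈ (k/N, 1), ∑_{j=0}^{k} C(N,j) x^j (1−x)^(N−j) ≤ exp(− N (x − k/N)² / (2 ((2/3)x + k/(3N)) (1 − (2/3)x − k/(3N)))). -/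
/-!
Chernoff's argument: for `0 ≤ t ≤ 1`, `t ^ k` times the lower tail of `Bin(N, x)` at `k` is at
most `(t x + 1 - x) ^ N`, and the optimal choice of `t` bounds the tail by
`exp (-N · KL(k/N ‖ x))`. The divergence `KL(a ‖ x)` dominates `(x - a)² / (2 m (1 - m))` with
`m = (a + 2x)/3`: both vanish at `x = a`, and the derivative in `x` of their difference is
`(4/9) (x - a)³ ((1 - m - x)² + x (1 - x)) / (x (1 - x) (2 m (1 - m))²) ≥ 0`.
-/

open Real Finset Set

theorem pow_mul_sum_range_choose_le_add_pow {R : Type*} [CommSemiring R] [PartialOrder R]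
    [IsOrderedRing R] {x y t : R} (hx : 0 ≤ x) (hy : 0 ≤ y) (ht₀ : 0 ≤ t) (ht₁ : t ≤ 1)
    {k N : ℕ} (hk : k ≤ N) :
    t ^ k * ∑ j ∈ range (k + 1), (N.choose j : R) * x ^ j * y ^ (N - j) ≤ (t * x + y) ^ N := by
  rw [add_pow, mul_sum]
  calc ∑ j ∈ range (k + 1), t ^ k * (N.choose j * x ^ j * y ^ (N - j))
      ≤ ∑ j ∈ range (k + 1), (t * x) ^ j * y ^ (N - j) * N.choose j := by
        refine sum_le_sum fun j hj => ?_
        calc t ^ k * (N.choose j * x ^ j * y ^ (N - j))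
            ≤ t ^ j * (N.choose j * x ^ j * y ^ (N - j)) :=
              mul_le_mul_of_nonneg_right
                (pow_le_pow_of_le_one ht₀ ht₁ (Nat.lt_succ_iff.1 (mem_range.1 hj))) (by positivity)
          _ = (t * x) ^ j * y ^ (N - j) * N.choose j := by ring
    _ ≤ ∑ j ∈ range (N + 1), (t * x) ^ j * y ^ (N - j) * N.choose j :=
        sum_le_sum_of_subset_of_nonneg (range_subset_range.2 (by omega))
          fun _ _ _ => by positivity

/-- `KL(Ber a ‖ Ber x)`; since `0 * log _ = 0`, the formula is also right at `a ∈ {0, 1}`. -/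
noncomputable def bernoulliKL (a x : ℝ) : ℝ :=
  a * log (a / x) + (1 - a) * log ((1 - a) / (1 - x))

noncomputable def massartRate (a x : ℝ) : ℝ :=
  (x - a) ^ 2 / (2 * (2 / 3 * x + a / 3) * (1 - 2 / 3 * x - a / 3))

theorem exp_neg_mul_bernoulliKL {N k : ℕ} (hk : k ≤ N) {a x : ℝ} (hNa : (N : ℝ) * a = k)
    (ha₀ : 0 < a) (ha₁ : a < 1) (hx₀ : 0 < x) (hx₁ : x < 1) :
    exp (-(N * bernoulliKL a x)) = (x / a) ^ k * ((1 - x) / (1 - a)) ^ (N - k) := by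
  have hlog : -(N * bernoulliKL a x)
      = k * log (x / a) + ((N - k : ℕ) : ℝ) * log ((1 - x) / (1 - a)) := by
    have h₁ : log (a / x) = -log (x / a) := by rw [← log_inv, inv_div]
    have h₂ : log ((1 - a) / (1 - x)) = -log ((1 - x) / (1 - a)) := by rw [← log_inv, inv_div]
    rw [bernoulliKL, h₁, h₂, Nat.cast_sub hk, ← hNa]
    ring
  have hu : 0 < (1 - x) / (1 - a) := div_pos (by linarith) (by linarith)
  rw [hlog, exp_add, exp_nat_mul, exp_nat_mul, exp_log (by positivity), exp_log hu]

theorem sum_range_choose_mul_pow_le_exp_neg_mul_bernoulliKL {N k : ℕ} (hk : k ≤ N) {x : ℝ}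
    (hkx : (k : ℝ) / N < x) (hx₁ : x < 1) :
    ∑ j ∈ range (k + 1), (N.choose j : ℝ) * x ^ j * (1 - x) ^ (N - j)
      ≤ exp (-(N * bernoulliKL (k / N) x)) := by
  have h1x : 0 < 1 - x := by linarith
  rcases k.eq_zero_or_pos with rfl | hk₀
  · apply le_of_eq
    simp [bernoulliKL, exp_nat_mul, exp_log h1x]
  · have hN : (0 : ℝ) < N := by exact_mod_cast hk₀.trans_le hk
    set a : ℝ := k / N
    have ha₀ : 0 < a := by positivity
    have hx₀ : 0 < x := ha₀.trans hkx
    have ha₁ : a < 1 := hkx.trans hx₁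
    have hNa : (N : ℝ) * a = k := mul_div_cancel₀ _ hN.ne'
    set u := (1 - x) / (1 - a)
    set v := x / a
    have hu : 0 < u := div_pos h1x (by linarith)
    have hv : 0 < v := div_pos hx₀ ha₀
    have huv : u ≤ v := calc
      u ≤ 1 := div_le_one_of_le₀ (by linarith) (by linarith)
      _ ≤ v := (one_le_div₀ ha₀).2 hkx.le
    -- `t = u / v` is the minimiser of `(t x + 1 - x) ^ N / t ^ k`
    have hbase : u / v * x + (1 - x) = u := by
      have : 1 - a ≠ 0 := by linarith
      simp only [u, v]
      field_simp
      ring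
    have hchernoff := pow_mul_sum_range_choose_le_add_pow hx₀.le h1x.le (by positivity)
      (div_le_one_of_le₀ huv hv.le) hk
    rw [hbase] at hchernoff
    rw [exp_neg_mul_bernoulliKL hk hNa ha₀ ha₁ hx₀ hx₁]
    calc _ ≤ u ^ N / (u / v) ^ k := (le_div_iff₀' (by positivity)).2 hchernoff
      _ = v ^ k * u ^ (N - k) := by
        rw [← pow_sub_mul_pow u hk, div_pow u v]
        field_simp

theorem hasDerivAt_mul_log_div (c : ℝ) {q : ℝ} (hq : q ≠ 0) :
    HasDerivAt (fun y => c * log (c / y)) (-c / q) q := by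
  rcases eq_or_ne c 0 with rfl | hc
  · simpa using hasDerivAt_const q (0 : ℝ)
  · have h := ((hasDerivAt_const q c).div (hasDerivAt_id q) hq).log (div_ne_zero hc hq)
    refine (h.const_mul c).congr_deriv ?_
    simp only [Pi.div_apply, id]
    field_simp
    ring

theorem hasDerivAt_bernoulliKL (a : ℝ) {p : ℝ} (hp₀ : 0 < p) (hp₁ : p < 1) :
    HasDerivAt (bernoulliKL a) ((p - a) / (p * (1 - p))) p := by
  have h₁ := hasDerivAt_mul_log_div a hp₀.ne'
  have h₂ := (hasDerivAt_mul_log_div (1 - a) (sub_ne_zero.2 hp₁.ne')).comp p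
    ((hasDerivAt_id p).const_sub 1)
  refine (h₁.add h₂).congr_deriv ?_
  have : 1 - p ≠ 0 := by linarith
  field_simp
  ring

theorem exists_hasDerivAt_massartRate_le {a p : ℝ} (ha : 0 ≤ a) (hap : a ≤ p) (hp₀ : 0 < p)
    (hp₁ : p < 1) : ∃ d, HasDerivAt (massartRate a) d p ∧ d ≤ (p - a) / (p * (1 - p)) := by
  have hm₀ : 0 < 2 / 3 * p + a / 3 := by linarith
  have hm₁ : 0 < 1 - 2 / 3 * p - a / 3 := by linarith
  have hnum : HasDerivAt (fun y => (y - a) ^ 2) (2 * (p - a)) p := by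
    refine (((hasDerivAt_id' p).sub_const a).fun_pow 2).congr_deriv ?_
    ring
  have hden : HasDerivAt (fun y => 2 * (2 / 3 * y + a / 3) * (1 - 2 / 3 * y - a / 3))
      (4 / 3 * (1 - 2 * (2 / 3 * p + a / 3))) p := by
    have hm := ((hasDerivAt_id' p).const_mul (2 / 3)).add_const (a / 3)
    have hm' := (((hasDerivAt_id' p).const_mul (2 / 3)).const_sub 1).sub_const (a / 3)
    refine ((hm.const_mul 2).fun_mul hm').congr_deriv ?_
    ring
  refine ⟨_, hnum.div hden (by positivity), ?_⟩
  rw [div_le_div_iff₀ (by positivity) (by positivity)]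
  have hgap : (p - a) * (2 * (2 / 3 * p + a / 3) * (1 - 2 / 3 * p - a / 3)) ^ 2
      - (2 * (p - a) * (2 * (2 / 3 * p + a / 3) * (1 - 2 / 3 * p - a / 3))
        - (p - a) ^ 2 * (4 / 3 * (1 - 2 * (2 / 3 * p + a / 3)))) * (p * (1 - p))
      = 4 / 9 * (p - a) ^ 3 * ((1 - 5 / 3 * p - a / 3) ^ 2 + p * (1 - p)) := by
    ring
  have : 0 ≤ 4 / 9 * (p - a) ^ 3 * ((1 - 5 / 3 * p - a / 3) ^ 2 + p * (1 - p)) := by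
    have := pow_nonneg (sub_nonneg.2 hap) 3
    have : 0 < p * (1 - p) := mul_pos hp₀ (by linarith)
    positivity
  linarith

theorem continuousOn_bernoulliKL_sub_massartRate {a x : ℝ} (ha : 0 ≤ a) (hx : x < 1) :
    ContinuousOn (fun p => bernoulliKL a p - massartRate a p) (Icc a x) := by
  rcases ha.eq_or_lt with rfl | ha₀
  · -- `massartRate 0 p = 9 p / (4 (3 - 2 p))`, also at the junk value `p = 0`
    refine ContinuousOn.congr (f := fun p => -log (1 - p) - 9 * p / (4 * (3 - 2 * p)))
      ?_ fun p hp => ?_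
    · refine ContinuousOn.sub (ContinuousOn.log (by fun_prop) fun p hp => ?_).neg
        (ContinuousOn.div (by fun_prop) (by fun_prop) fun p hp => ?_) <;> linarith [hp.2]
    · have : 3 - 2 * p ≠ 0 := by linarith [hp.2]
      rcases eq_or_ne p 0 with rfl | hp₀
      · simp [bernoulliKL, massartRate]
      · simp only [bernoulliKL, massartRate, zero_div, log_zero, mul_zero, sub_zero, zero_add,
          one_mul, one_div, log_inv, add_zero, sub_right_inj]
        field_simp
        ring
  · intro p hp
    have hp₀ : 0 < p := ha₀.trans_le hp.1
    have hp₁ : p < 1 := hp.2.trans_lt hx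
    obtain ⟨d, hd, -⟩ := exists_hasDerivAt_massartRate_le ha₀.le hp.1 hp₀ hp₁
    exact ((hasDerivAt_bernoulliKL a hp₀ hp₁).sub hd).continuousAt.continuousWithinAt

theorem massartRate_le_bernoulliKL {a x : ℝ} (ha : 0 ≤ a) (hax : a < x) (hx : x < 1) :
    massartRate a x ≤ bernoulliKL a x := by
  have hderiv : ∀ p ∈ interior (Icc a x), ∃ d,
      HasDerivAt (fun p => bernoulliKL a p - massartRate a p) d p ∧ 0 ≤ d := by
    rw [interior_Icc]
    rintro p ⟨hap, hpx⟩
    have hp₀ : 0 < p := ha.trans_lt hap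
    obtain ⟨d, hd, hle⟩ := exists_hasDerivAt_massartRate_le ha hap.le hp₀ (hpx.trans hx)
    exact ⟨_, (hasDerivAt_bernoulliKL a hp₀ (hpx.trans hx)).sub hd, sub_nonneg.2 hle⟩
  choose! d hd hd₀ using hderiv
  have hmono := monotoneOn_of_hasDerivWithinAt_nonneg (convex_Icc a x)
    (continuousOn_bernoulliKL_sub_massartRate ha hx) (fun p hp => (hd p hp).hasDerivWithinAt) hd₀
  simpa [bernoulliKL, massartRate] using
    hmono (left_mem_Icc.2 hax.le) (right_mem_Icc.2 hax.le) hax.le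

theorem binomial_cdf_upper_bound_general
    (N : ℕ) (k : ℕ) (hk : k ≤ N)
    (x : ℝ) (hx : x ∈ Set.Ioo ((k : ℝ) / N) 1) :
    ∑ j ∈ Finset.range (k + 1), (N.choose j : ℝ) * x ^ j * (1 - x) ^ (N - j)
    ≤ Real.exp (- (N * (x - (k : ℝ) / N) ^ 2) /
        (2 * (2 / 3 * x + k / (3 * N)) * (1 - 2 / 3 * x - k / (3 * N)))) := by
  obtain ⟨hkx, hx₁⟩ := hx
  have hrate : massartRate (k / N) x ≤ bernoulliKL (k / N) x :=
    massartRate_le_bernoulliKL (by positivity) hkx hx₁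
  have hexponent : -(N * (x - (k : ℝ) / N) ^ 2) /
      (2 * (2 / 3 * x + k / (3 * N)) * (1 - 2 / 3 * x - k / (3 * N)))
      = -(N * massartRate (k / N) x) := by
    rw [massartRate]
    ring
  rw [hexponent]
  refine (sum_range_choose_mul_pow_le_exp_neg_mul_bernoulliKL hk hkx hx₁).trans ?_
  exact exp_le_exp.2 (neg_le_neg (mul_le_mul_of_nonneg_left hrate N.cast_nonneg))

/-- For `x ∈ (k/N, 1)`, the binomial cdf at `k` satisfies the Massart-type bound
`∑_{j=0}^{k} C(N,j) x^j (1-x)^(N-j) ≤ exp(-N(x - k/N)² / (2((2/3)x + k/(3N))(1 - (2/3)x - k/(3N))))`. -/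
theorem binomial_cdf_upper_bound
    (N : ℕ) (hN : 0 < N) (k : ℕ) (hk : k ≤ N)
    (x : ℝ) (hx : x ∈ Set.Ioo ((k : ℝ) / N) 1) :
    ∑ j ∈ Finset.range (k + 1), (N.choose j : ℝ) * x ^ j * (1 - x) ^ (N - j)
    ≤ Real.exp (- (N * (x - (k : ℝ) / N) ^ 2) /
        (2 * (2 / 3 * x + k / (3 * N)) * (1 - 2 / 3 * x - k / (3 * N)))) :=
  binomial_cdf_upper_bound_general N k hk x hx
end
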